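/- Under the PART 3 setup, let R_{-i} ∈ ∏_{j≠i} 𝓡_j be a subprofile such that O_i(R_{-i}, 𝓡'_i) ≠ O_i(R_{-i}, 𝓡_i). Suppose there exist an agent j ≠ i and preferences R̂_j, R'_j, R''_j ∈ 𝓡_j such that O_i((R̂_j, R_{-{i,j}}), 𝓡'_i) = {x, z}, R'_j and R''_j are adjacent with respect to {x, y, z}, O_i((R'_j, R_{-{i,j}}), 𝓡'_i) = r(f'), and O_i((R'_j, R_{-{i,j}}), 𝓡_i) = r(f). Then O_i((R''_j, R_{-{i,j}}), 𝓡'_i) = r(f') and O_i((R''_j, R_{-{i,j}}), 𝓡_i) = r(f). -/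

import Mathlib

/-!
The adjacent change `R1 → R2` of agent `j` reverses a single pair `(v, w)` of `{x, y, z}`, so by
strategy-proofness for `j` each outcome of agent `i` either stays put or moves from `v` to `w`.
At `R1` the option sets of `i` are the full ranges, so `i` gets the top of `{x, y, z}` under each
of its preferences, and no ordered pair of `{x, y, z}` other than `(x, y)` is fixed in `𝓡'_i`;
so non-conditionality provides the test preferences `x y z`, `z x y ∈ 𝓡'_i` and `y x z`,
`y z x`, `z y x ∈ 𝓡_i`. If `x`, `z` or `y` dropped out of an option set at `R2`, the single move
`v → w` would let `i` manipulate at one of these test preferences.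
-/

/-- A preference is represented by its strict relation `P`, where `P a b` means
`a` is strictly preferred to `b`. -/
abbrev Pref (X : Type*) := X → X → Prop

/-- The universal domain: all strict linear orders (strict total orders) on `X`. -/
def univDomain (X : Type*) : Set (Pref X) := {P | IsStrictTotalOrder X P}

/-- `S(𝓑)`: the set of ordered pairs of distinct alternatives that are fixed
(ranked the same way) throughout the domain `𝓑`. -/
def fixedPairs {X : Type*} (B : Set (Pref X)) : Set (X × X) :=
  {p | p.1 ≠ p.2 ∧ ∀ P ∈ B, P p.1 p.2}

/-- A preference domain is non-conditional if it consists exactly of the strict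
linear orders respecting all of its fixed pairs. -/
def NonConditional {X : Type*} (B : Set (Pref X)) : Prop :=
  B = {P | P ∈ univDomain X ∧ ∀ p ∈ fixedPairs B, P p.1 p.2}

/-- `{x, y} ∈ S⁻¹(𝓑)`: the unordered pair `{x, y}` is a free pair of `𝓑`. -/
def FreePair {X : Type*} (B : Set (Pref X)) (x y : X) : Prop :=
  x ≠ y ∧ (x, y) ∉ fixedPairs B ∧ (y, x) ∉ fixedPairs B

/-- The profile `R` lies in the product domain `∏ i, 𝓡 i`. -/
def InDomain {N X : Type*} (𝓡 : N → Set (Pref X)) (R : N → Pref X) : Prop :=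
  ∀ i, R i ∈ 𝓡 i

/-- The range `r(f)` of a social choice rule `f` over the domain `𝓡`. -/
def scrRange {N X : Type*} (𝓡 : N → Set (Pref X)) (f : (N → Pref X) → X) : Set X :=
  {x | ∃ R, InDomain 𝓡 R ∧ f R = x}

/-- Strategy-proofness of `f` on the product domain `𝓡`: no agent `i` can, at any
profile of the domain, obtain a strictly preferred outcome by misreporting. -/
def StrategyProof {N X : Type*} [DecidableEq N] (𝓡 : N → Set (Pref X))
    (f : (N → Pref X) → X) : Prop :=
  ∀ R, InDomain 𝓡 R → ∀ i, ∀ P' ∈ 𝓡 i, ¬ R i (f (Function.update R i P')) (f R)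

/-- `f` is a dictatorship of agent `i` on the domain `𝓡`: at every profile of the
domain, `f` selects an outcome weakly preferred by `i` to every element of the range. -/
def Dictatorship {N X : Type*} (𝓡 : N → Set (Pref X)) (f : (N → Pref X) → X)
    (i : N) : Prop :=
  ∀ R, InDomain 𝓡 R → ∀ x ∈ scrRange 𝓡 f, f R = x ∨ R i (f R) x

/-- `f` is non-dictatorial on the domain `𝓡`. -/
def NonDictatorial {N X : Type*} (𝓡 : N → Set (Pref X)) (f : (N → Pref X) → X) : Prop :=
  ∀ i, ¬ Dictatorship 𝓡 f i

/-- The option set `O_i(R_{-i}, 𝓑)` of agent `i` at the subprofile `R_{-i}`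
relative to the set of preferences `𝓑`. -/
def optionSet {N X : Type*} [DecidableEq N] (f : (N → Pref X) → X) (i : N)
    (R : N → Pref X) (B : Set (Pref X)) : Set X :=
  {x | ∃ P ∈ B, f (Function.update R i P) = x}

/-- Two preferences are adjacent with respect to `{x, y, z}`: they disagree on
exactly one pair of distinct alternatives of `{x, y, z}` and agree on all the
other pairs of `{x, y, z}`. -/
def AdjacentOn {X : Type*} (P P' : Pref X) (x y z : X) : Prop :=
  ∃ v ∈ ({x, y, z} : Set X), ∃ w ∈ ({x, y, z} : Set X), v ≠ w ∧ P v w ∧ P' w v ∧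
    ∀ s ∈ ({x, y, z} : Set X), ∀ t ∈ ({x, y, z} : Set X), s ≠ t →
      ({s, t} : Set X) ≠ {v, w} → (P s t ↔ P' s t)

section

open Function

variable {X : Type*}

theorem exists_isStrictTotalOrder_le (r : X → X → Prop) [IsStrictOrder X r] :
    ∃ P : X → X → Prop, IsStrictTotalOrder X P ∧ r ≤ P := by
  let := partialOrderOfSO r
  refine ⟨fun s t => toLinearExtension s < toLinearExtension t,
    inferInstanceAs (IsStrictTotalOrder (LinearExtension X) (· < ·)), fun s t h => ?_⟩
  exact toLinearExtension.monotone.strictMono_of_injective (fun _ _ h => h) (show s < t from h)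

-- For transitive `r`, the transitive closure of `r` together with the pair `(a, b)`.
def addPair (r : X → X → Prop) (a b s t : X) : Prop :=
  r s t ∨ ((s = a ∨ r s a) ∧ (t = b ∨ r b t))

theorem le_addPair (r : X → X → Prop) (a b : X) : r ≤ addPair r a b := fun _ _ => Or.inl

theorem addPair_self (r : X → X → Prop) (a b : X) : addPair r a b a b :=
  Or.inr ⟨Or.inl rfl, Or.inl rfl⟩

theorem isStrictOrder_addPair {r : X → X → Prop} [IsStrictOrder X r] {a b : X} (hab : a ≠ b)
    (hba : ¬ r b a) : IsStrictOrder X (addPair r a b) where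
  irrefl s := by
    rintro (h | ⟨rfl | hsa, rfl | hbs⟩)
    · exact irrefl s h
    · exact hab rfl
    · exact hba hbs
    · exact hba hsa
    · exact hba (_root_.trans hbs hsa)
  trans s t u := by
    have below_b_above_a : ∀ {c}, (c = b ∨ r b c) → (c = a ∨ r c a) → False := by
      rintro c (rfl | hbc) (hca | hca)
      · exact hab hca.symm
      · exact hba hca
      · exact hba (hca ▸ hbc)
      · exact hba (_root_.trans hbc hca)
    rintro (hst | ⟨hsa, htb⟩) (htu | ⟨hta, hub⟩)
    · exact Or.inl (_root_.trans hst htu)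
    · refine Or.inr ⟨Or.inr ?_, hub⟩
      rcases hta with rfl | hta
      exacts [hst, _root_.trans hst hta]
    · refine Or.inr ⟨hsa, Or.inr ?_⟩
      rcases htb with rfl | htb
      exacts [htu, _root_.trans htb htu]
    · exact (below_b_above_a htb hta).elim

namespace NonConditional

variable {B : Set (Pref X)}

theorem isStrictTotalOrder (hB : NonConditional B) {P : Pref X} (hP : P ∈ B) :
    IsStrictTotalOrder X P := by
  rw [hB] at hP
  exact hP.1

theorem mem_of_isStrictTotalOrder (hB : NonConditional B) {P : Pref X}
    (hP : IsStrictTotalOrder X P) (hfix : ∀ s t, (s, t) ∈ fixedPairs B → P s t) : P ∈ B := by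
  rw [hB]
  exact ⟨hP, fun p hp => hfix p.1 p.2 hp⟩

theorem isStrictOrder_fixedPairs (hB : NonConditional B) (hne : B.Nonempty) :
    IsStrictOrder X (fun s t => (s, t) ∈ fixedPairs B) where
  irrefl _ h := h.1 rfl
  trans s t u hst htu := by
    refine ⟨?_, fun P hP => ?_⟩
    · rintro (rfl : s = u)
      obtain ⟨P, hP⟩ := hne
      have := hB.isStrictTotalOrder hP
      exact asymm (hst.2 P hP) (htu.2 P hP)
    · have := hB.isStrictTotalOrder hP
      exact _root_.trans (hst.2 P hP) (htu.2 P hP)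

theorem exists_mem_chain (hB : NonConditional B) {a b c : X} (hab : a ≠ b) (hbc : b ≠ c)
    (hac : a ≠ c) (hba : (b, a) ∉ fixedPairs B) (hcb : (c, b) ∉ fixedPairs B)
    (hca : (c, a) ∉ fixedPairs B) : ∃ P ∈ B, P a b ∧ P b c ∧ P a c := by
  have hne : B.Nonempty := Set.nonempty_iff_ne_empty.2 fun h => hba ⟨hab.symm, by simp [h]⟩
  have := hB.isStrictOrder_fixedPairs hne
  have := isStrictOrder_addPair (r := fun s t => (s, t) ∈ fixedPairs B) hab hba
  have hcb' : ¬ addPair (fun s t => (s, t) ∈ fixedPairs B) a b c b := by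
    rintro (h | ⟨rfl | h, -⟩)
    exacts [hcb h, hac rfl, hca h]
  obtain ⟨P, hP, hle⟩ := @exists_isStrictTotalOrder_le _ _ (isStrictOrder_addPair hbc hcb')
  have hPab : P a b := hle _ _ (le_addPair _ _ _ _ _ (addPair_self _ _ _))
  have hPbc : P b c := hle _ _ (addPair_self _ _ _)
  refine ⟨P, hB.mem_of_isStrictTotalOrder hP fun s t h => ?_, hPab, hPbc, _root_.trans hPab hPbc⟩
  exact hle _ _ (le_addPair _ _ _ _ _ (le_addPair _ _ _ _ _ h))

end NonConditional

theorem AdjacentOn.exists_unique_reversal {P P' : Pref X} {x y z : X} (h : AdjacentOn P P' x y z)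
    [IsStrictTotalOrder X P] [IsStrictTotalOrder X P'] :
    ∃ v w, ∀ s ∈ ({x, y, z} : Set X), ∀ t ∈ ({x, y, z} : Set X), P s t → P' t s →
      s = v ∧ t = w := by
  obtain ⟨v, -, w, -, -, hPvw, -, hagree⟩ := h
  refine ⟨v, w, fun s hs t ht hPst hP'ts => ?_⟩
  by_cases hst : ({s, t} : Set X) = {v, w}
  · rcases Set.pair_eq_pair_iff.1 hst with h | ⟨rfl, rfl⟩
    · exact h
    · exact (asymm hPst hPvw).elim
  · exact (asymm ((hagree s hs t ht (ne_of_irrefl hPst) hst).1 hPst) hP'ts).elim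

def IsStrategyProofOn (g : Pref X → X) (D : Set (Pref X)) : Prop :=
  ∀ P ∈ D, ∀ Q ∈ D, ¬ P (g Q) (g P)

namespace IsStrategyProofOn

variable {g : Pref X → X} {D : Set (Pref X)}

theorem notMem_fixedPairs {B : Set (Pref X)} (hg : IsStrategyProofOn g D) (hBD : B ⊆ D)
    {a b : X} (ha : a ∈ g '' B) (hb : b ∈ g '' D) : (b, a) ∉ fixedPairs B := by
  obtain ⟨P, hP, rfl⟩ := ha
  obtain ⟨Q, hQ, rfl⟩ := hb
  exact fun h => hg P (hBD hP) Q hQ (h.2 P hP)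

theorem apply_eq_of_rel (hg : IsStrategyProofOn g D) {P : Pref X} (hP : P ∈ D) {a b c : X}
    (himg : g '' D = {a, b, c}) (hab : P a b) (hac : P a c) : g P = a := by
  obtain ⟨Q, hQ, hQa⟩ : a ∈ g '' D := himg ▸ Set.mem_insert a _
  have hPmem : g P ∈ ({a, b, c} : Set X) := himg ▸ Set.mem_image_of_mem g hP
  rcases hPmem with h | h | h
  · exact h
  all_goals exact (hg P hP Q hQ (by rwa [hQa, h])).elim

theorem exists_mem_apply_eq_of_subset (hg : IsStrategyProofOn g D) {B : Set (Pref X)}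
    (hB : NonConditional B) (hBD : B ⊆ D) {a b c : X} (himg : g '' D = {a, b, c}) (hab : a ≠ b)
    (hbc : b ≠ c) (hac : a ≠ c) (hba : (b, a) ∉ fixedPairs B) (hcb : (c, b) ∉ fixedPairs B)
    (hca : (c, a) ∉ fixedPairs B) : ∃ P ∈ B, g P = a ∧ P a b ∧ P b c ∧ P a c := by
  obtain ⟨P, hP, hPab, hPbc, hPac⟩ := hB.exists_mem_chain hab hbc hac hba hcb hca
  exact ⟨P, hP, hg.apply_eq_of_rel (hBD hP) himg hPab hPac, hPab, hPbc, hPac⟩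

theorem exists_mem_apply_eq (hg : IsStrategyProofOn g D) (hD : NonConditional D) {a b c : X}
    (himg : g '' D = {a, b, c}) (hab : a ≠ b) (hbc : b ≠ c) (hac : a ≠ c) :
    ∃ P ∈ D, g P = a ∧ P a b ∧ P b c ∧ P a c :=
  have free {s t : X} (hs : s ∈ ({a, b, c} : Set X)) (ht : t ∈ ({a, b, c} : Set X)) :
      (t, s) ∉ fixedPairs D := hg.notMem_fixedPairs subset_rfl (himg ▸ hs) (himg ▸ ht)
  hg.exists_mem_apply_eq_of_subset hD subset_rfl himg hab hbc hac (free (by simp) (by simp))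
    (free (by simp) (by simp)) (free (by simp) (by simp))

end IsStrategyProofOn

def OnlyMoves (g₁ g₂ : Pref X → X) (D : Set (Pref X)) (v w : X) : Prop :=
  ∀ P ∈ D, g₂ P ≠ g₁ P → g₁ P = v ∧ g₂ P = w

namespace OnlyMoves

variable {g₁ g₂ : Pref X → X} {D : Set (Pref X)} {v w : X}

theorem apply_eq (h : OnlyMoves g₁ g₂ D v w) {P : Pref X} (hP : P ∈ D) (hv : g₁ P ≠ v) :
    g₂ P = g₁ P :=
  by_contra fun hne => hv (h P hP hne).1

/-- If the outcome `a` of `P` moved, it moved to `c`; then `Q'` would either keep `a`, which `P`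
could obtain, or move to `c` too, and `Q'` could obtain `b` from `Q`. -/
theorem apply_eq_of_rel (h : OnlyMoves g₁ g₂ D v w) (hg₂ : IsStrategyProofOn g₂ D)
    {P Q Q' : Pref X} (hP : P ∈ D) (hQ : Q ∈ D) (hQ' : Q' ∈ D) {a b c : X} (hba : b ≠ a)
    (h₁P : g₁ P = a) (h₁Q : g₁ Q = b) (h₁Q' : g₁ Q' = a) (h₂P : g₂ P = a ∨ g₂ P = c)
    (hPac : P a c) (hQ'bc : Q' b c) : g₂ P = a := by
  by_contra hne
  obtain ⟨hav, hcw⟩ := h P hP (h₁P ▸ hne)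
  rw [h₂P.resolve_left hne] at hcw
  have h₂Q : g₂ Q = b := (h.apply_eq hQ (h₁Q ▸ hav ▸ h₁P ▸ hba)).trans h₁Q
  by_cases h₂Q' : g₂ Q' = a
  · exact hg₂ P hP Q' hQ' (by rwa [h₂Q', h₂P.resolve_left hne])
  · have : g₂ Q' = c := hcw ▸ (h Q' hQ' (h₁Q' ▸ h₂Q')).2
    exact hg₂ Q' hQ' Q hQ (by rwa [h₂Q, this])

/-- If `b` were lost, both `Q₁` and `Q₂` would move it to the same `w ∈ {a, c}`, and one of them
could then obtain the alternative it ranks above `w`. -/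
theorem mem_image_of_rel (h : OnlyMoves g₁ g₂ D v w) (hg₂ : IsStrategyProofOn g₂ D)
    {Q₁ Q₂ : Pref X} (hQ₁ : Q₁ ∈ D) (hQ₂ : Q₂ ∈ D) {a b c : X} (h₁Q₁ : g₁ Q₁ = b)
    (h₁Q₂ : g₁ Q₂ = b) (h₂Q₁ : g₂ Q₁ ∈ ({a, b, c} : Set X)) (ha : a ∈ g₂ '' D)
    (hc : c ∈ g₂ '' D) (hQ₁ac : Q₁ a c) (hQ₂ca : Q₂ c a) : b ∈ g₂ '' D := by
  by_contra hb
  have hne : ∀ {Q}, Q ∈ D → g₂ Q ≠ b := fun hQ h => hb ⟨_, hQ, h⟩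
  have hsame : g₂ Q₁ = g₂ Q₂ :=
    (h Q₁ hQ₁ (h₁Q₁ ▸ hne hQ₁)).2.trans (h Q₂ hQ₂ (h₁Q₂ ▸ hne hQ₂)).2.symm
  obtain ⟨Pa, hPa, h₂Pa⟩ := ha
  obtain ⟨Pc, hPc, h₂Pc⟩ := hc
  rcases h₂Q₁ with h₂ | h₂ | h₂
  · exact hg₂ Q₂ hQ₂ Pc hPc (by rwa [h₂Pc, ← hsame, h₂])
  · exact hne hQ₁ h₂
  · exact hg₂ Q₁ hQ₁ Pa hPa (by rwa [h₂Pa, h₂])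

theorem image_eq_and_image_eq (h : OnlyMoves g₁ g₂ D v w) {D' : Set (Pref X)} (hD'D : D' ⊆ D)
    (hNC' : NonConditional D') (hNC : NonConditional D) {x y z : X}
    (hS : fixedPairs D = fixedPairs D' \ {(x, y)}) (hxy : x ≠ y) (hzx : z ≠ x) (hzy : z ≠ y)
    (hg₁ : IsStrategyProofOn g₁ D) (hg₂ : IsStrategyProofOn g₂ D)
    (h₁' : g₁ '' D' = {x, z}) (h₁ : g₁ '' D = {x, y, z})
    (h₂' : g₂ '' D' ⊆ {x, z}) (h₂ : g₂ '' D ⊆ {x, y, z}) :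
    g₂ '' D' = {x, z} ∧ g₂ '' D = {x, y, z} := by
  have hx' : x ∈ g₁ '' D' := by simp [h₁']
  have hz' : z ∈ g₁ '' D' := by simp [h₁']
  have free' {a b : X} (ha : a ∈ g₁ '' D') (hb : b ∈ ({x, y, z} : Set X)) :
      (b, a) ∉ fixedPairs D' := hg₁.notMem_fixedPairs hD'D ha (h₁ ▸ hb)
  have hzy' : (z, y) ∉ fixedPairs D' := fun h =>
    hg₁.notMem_fixedPairs (a := y) (b := z) subset_rfl (by simp [h₁]) (by simp [h₁])
      (show (z, y) ∈ fixedPairs D from hS ▸ ⟨h, by simp [hzx]⟩)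
  have h₁y : g₁ '' D = {y, x, z} := h₁.trans (Set.insert_comm x y {z})
  have h₁z : g₁ '' D = {z, x, y} := by rw [h₁, Set.pair_comm y z, Set.insert_comm x z]
  obtain ⟨Pxyz, hPxyz, h₁Pxyz, -, hPxyz_yz, hPxyz_xz⟩ := hg₁.exists_mem_apply_eq_of_subset hNC'
    hD'D h₁ hxy hzy.symm hzx.symm (free' hx' (by simp)) hzy' (free' hx' (by simp))
  obtain ⟨Pzxy, hPzxy, h₁Pzxy, hPzxy_zx, -⟩ := hg₁.exists_mem_apply_eq_of_subset hNC' hD'D h₁z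
    hzx hxy hzy (free' hz' (by simp)) (free' hx' (by simp)) (free' hz' (by simp))
  obtain ⟨Qyxz, hQyxz, h₁Qyxz, -, hQyxz_xz, -⟩ :=
    hg₁.exists_mem_apply_eq hNC h₁y hxy.symm hzx.symm hzy.symm
  obtain ⟨Qyzx, hQyzx, h₁Qyzx, -, hQyzx_zx, -⟩ :=
    hg₁.exists_mem_apply_eq hNC (by rw [h₁y, Set.pair_comm x z]) hzy.symm hzx hxy.symm
  obtain ⟨Qzyx, hQzyx, h₁Qzyx, -, hQzyx_yx, -⟩ :=
    hg₁.exists_mem_apply_eq hNC (by rw [h₁z, Set.pair_comm x y]) hzy hxy.symm hzx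
  have h₂Pxyz : g₂ Pxyz = x := h.apply_eq_of_rel hg₂ (hD'D hPxyz) hQyxz (hD'D hPxyz) hxy.symm
    h₁Pxyz h₁Qyxz h₁Pxyz (h₂' ⟨_, hPxyz, rfl⟩) hPxyz_xz hPxyz_yz
  have h₂Pzxy : g₂ Pzxy = z := h.apply_eq_of_rel hg₂ (hD'D hPzxy) hQyzx hQzyx hzy.symm
    h₁Pzxy h₁Qyzx h₁Qzyx (h₂' ⟨_, hPzxy, rfl⟩).symm hPzxy_zx hQzyx_yx
  have hx₂ : x ∈ g₂ '' D' := ⟨_, hPxyz, h₂Pxyz⟩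
  have hz₂ : z ∈ g₂ '' D' := ⟨_, hPzxy, h₂Pzxy⟩
  have hy₂ : y ∈ g₂ '' D := h.mem_image_of_rel hg₂ hQyxz hQyzx h₁Qyxz h₁Qyzx
    (h₂ ⟨_, hQyxz, rfl⟩) (Set.image_mono hD'D hx₂) (Set.image_mono hD'D hz₂) hQyxz_xz hQyzx_zx
  refine ⟨h₂'.antisymm ?_, h₂.antisymm ?_⟩
  · simp [Set.insert_subset_iff, hx₂, hz₂]
  · simp [Set.insert_subset_iff, hy₂, Set.image_mono hD'D hx₂, Set.image_mono hD'D hz₂]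

end OnlyMoves

section Profiles

variable {N : Type*} [DecidableEq N] {𝓡 : N → Set (Pref X)} {R : N → Pref X} {i : N}

theorem update_mem_of_ne (hR : ∀ k ≠ i, R k ∈ 𝓡 k) {j : N} {Q : Pref X} (hQ : Q ∈ 𝓡 j) :
    ∀ k ≠ i, update R j Q k ∈ 𝓡 k := by
  intro k hk
  rcases eq_or_ne k j with rfl | hkj
  · simpa using hQ
  · simpa [hkj] using hR k hk

theorem inDomain_update (hR : ∀ k ≠ i, R k ∈ 𝓡 k) {P : Pref X} (hP : P ∈ 𝓡 i) :
    InDomain 𝓡 (update R i P) := by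
  intro k
  rcases eq_or_ne k i with rfl | hki
  · simpa using hP
  · simpa [hki] using hR k hki

namespace StrategyProof

variable {f : (N → Pref X) → X}

theorem isStrategyProofOn (hSP : StrategyProof 𝓡 f) (hR : ∀ k ≠ i, R k ∈ 𝓡 k) :
    IsStrategyProofOn (fun P => f (update R i P)) (𝓡 i) := by
  intro P hP Q hQ
  simpa using hSP _ (inDomain_update hR hP) i Q hQ

theorem rel_of_update_ne (hSP : StrategyProof 𝓡 f) (hR : ∀ k ≠ i, R k ∈ 𝓡 k) {P Q : Pref X}
    (hP : P ∈ 𝓡 i) (hQ : Q ∈ 𝓡 i) [IsStrictTotalOrder X P]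
    (hne : f (update R i P) ≠ f (update R i Q)) : P (f (update R i P)) (f (update R i Q)) :=
  (trichotomous_of P _ _).resolve_right (not_or_intro hne (hSP.isStrategyProofOn hR P hP Q hQ))

theorem onlyMoves (hSP : StrategyProof 𝓡 f) (hR : ∀ k ≠ i, R k ∈ 𝓡 k) {j : N} (hji : j ≠ i)
    {R₁ R₂ : Pref X} (hR₁ : R₁ ∈ 𝓡 j) (hR₂ : R₂ ∈ 𝓡 j) [IsStrictTotalOrder X R₁]
    [IsStrictTotalOrder X R₂] {T : Set X} (hT : scrRange 𝓡 f ⊆ T) {v w : X}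
    (hrev : ∀ s ∈ T, ∀ t ∈ T, R₁ s t → R₂ t s → s = v ∧ t = w) :
    OnlyMoves (fun P => f (update (update R j R₁) i P)) (fun P => f (update (update R j R₂) i P))
      (𝓡 i) v w := by
  intro P hP hne
  have hR' : ∀ k ≠ j, update R i P k ∈ 𝓡 k := fun k _ => inDomain_update hR hP k
  simp only [update_comm hji] at hne ⊢
  exact hrev _ (hT ⟨_, inDomain_update hR' hR₁, rfl⟩) _ (hT ⟨_, inDomain_update hR' hR₂, rfl⟩)
    (hSP.rel_of_update_ne hR' hR₁ hR₂ (Ne.symm hne)) (hSP.rel_of_update_ne hR' hR₂ hR₁ hne)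

end StrategyProof

end Profiles

end

theorem statement13_general {N X : Type*} [DecidableEq N]
    (i : N) (𝓡 𝓡' : N → Set (Pref X))
    (hAgree : ∀ j, j ≠ i → 𝓡' j = 𝓡 j)
    (hNC : ∀ j, NonConditional (𝓡 j)) (hNC' : NonConditional (𝓡' i))
    (hss : 𝓡' i ⊂ 𝓡 i) (x y : X)
    (hxy : (x, y) ∈ fixedPairs (𝓡' i))
    (hS : fixedPairs (𝓡 i) = fixedPairs (𝓡' i) \ {(x, y)})
    (f : (N → Pref X) → X) (hSP : StrategyProof 𝓡 f)
    (z : X) (hzx : z ≠ x) (hzy : z ≠ y)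
    (hrange' : scrRange 𝓡' f = {x, z})
    (hrange : scrRange 𝓡 f = {x, y, z}) :
    ∀ R : N → Pref X, (∀ j, j ≠ i → R j ∈ 𝓡 j) →
      optionSet f i R (𝓡' i) ≠ optionSet f i R (𝓡 i) →
      ∀ j, j ≠ i → ∀ Rhat ∈ 𝓡 j, ∀ R1 ∈ 𝓡 j, ∀ R2 ∈ 𝓡 j,
        optionSet f i (Function.update R j Rhat) (𝓡' i) = {x, z} →
        AdjacentOn R1 R2 x y z →
        optionSet f i (Function.update R j R1) (𝓡' i) = scrRange 𝓡' f →
        optionSet f i (Function.update R j R1) (𝓡 i) = scrRange 𝓡 f →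
        optionSet f i (Function.update R j R2) (𝓡' i) = scrRange 𝓡' f ∧
          optionSet f i (Function.update R j R2) (𝓡 i) = scrRange 𝓡 f := by
  intro R hR _ j hji _ _ R₁ hR₁ R₂ hR₂ _ hadj hA₁ hB₁
  have := (hNC j).isStrictTotalOrder hR₁
  have := (hNC j).isStrictTotalOrder hR₂
  obtain ⟨v, w, hrev⟩ := hadj.exists_unique_reversal
  have hR₁' := update_mem_of_ne hR hR₁
  have hR₂' := update_mem_of_ne hR hR₂
  have hR₂'' : ∀ k ≠ i, Function.update R j R₂ k ∈ 𝓡' k := fun k hk => hAgree k hk ▸ hR₂' k hk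
  rw [hrange'] at hA₁ ⊢
  rw [hrange] at hB₁ ⊢
  refine (hSP.onlyMoves hR hji hR₁ hR₂ hrange.subset hrev).image_eq_and_image_eq hss.subset
    hNC' (hNC i) hS hxy.1 hzx hzy (hSP.isStrategyProofOn hR₁') (hSP.isStrategyProofOn hR₂')
    hA₁ hB₁ ?_ ?_
  · rintro _ ⟨P, hP, rfl⟩
    exact hrange' ▸ ⟨_, inDomain_update hR₂'' hP, rfl⟩
  · rintro _ ⟨P, hP, rfl⟩
    exact hrange ▸ ⟨_, inDomain_update hR₂' hP, rfl⟩

theorem statement13 {N X : Type*} [Fintype N] [Nonempty N] [Fintype X] [DecidableEq N]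
    (i : N) (𝓡 𝓡' : N → Set (Pref X))
    (hAgree : ∀ j, j ≠ i → 𝓡' j = 𝓡 j)
    (hNC : ∀ j, NonConditional (𝓡 j)) (hNC' : NonConditional (𝓡' i))
    (hss : 𝓡' i ⊂ 𝓡 i) (x y : X)
    (hxy : (x, y) ∈ fixedPairs (𝓡' i))
    (hS : fixedPairs (𝓡 i) = fixedPairs (𝓡' i) \ {(x, y)})
    (hnoz : ¬ ∃ z, (x, z) ∈ fixedPairs (𝓡' i) ∧ (z, y) ∈ fixedPairs (𝓡' i))
    (f : (N → Pref X) → X) (hSP : StrategyProof 𝓡 f)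
    (z : X) (hzx : z ≠ x) (hzy : z ≠ y)
    (hrange' : scrRange 𝓡' f = {x, z})
    (hrange : scrRange 𝓡 f = {x, y, z}) :
    ∀ R : N → Pref X, (∀ j, j ≠ i → R j ∈ 𝓡 j) →
      optionSet f i R (𝓡' i) ≠ optionSet f i R (𝓡 i) →
      ∀ j, j ≠ i → ∀ Rhat ∈ 𝓡 j, ∀ R1 ∈ 𝓡 j, ∀ R2 ∈ 𝓡 j,
        optionSet f i (Function.update R j Rhat) (𝓡' i) = {x, z} →
        AdjacentOn R1 R2 x y z →
        optionSet f i (Function.update R j R1) (𝓡' i) = scrRange 𝓡' f →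
        optionSet f i (Function.update R j R1) (𝓡 i) = scrRange 𝓡 f →
        optionSet f i (Function.update R j R2) (𝓡' i) = scrRange 𝓡' f ∧
          optionSet f i (Function.update R j R2) (𝓡 i) = scrRange 𝓡 f :=
  statement13_general i 𝓡 𝓡' hAgree hNC hNC' hss x y hxy hS f hSP z hzx hzy hrange' hrange
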